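/- arXiv:0910.5501 — 2 statements merged into one kernel-verified Lean document; each statement's English description precedes it below -/
import Mathlib

section
/- Let X be a metric space and δ > 0. Suppose A and B are finite sets with the same number of elements, equipped with their counting measures Λ_A and Λ_B respectively, and suppose f : A → X and g : B → X are maps such that the pushforward measures f_*Λ_A and g_*Λ_B on X are δ-equivalent. Then there exists a bijection h : A → B such that dist(g(h(a)), f(a)) ≤ δ for every a ∈ A. -/
/-!
Apply Hall's marriage theorem to the relation `dist (g b) (f a) ≤ δ`. For `s ⊆ A`, testing
`δ`-equivalence on the finite (hence Borel) set `S = f '' s` gives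
`#s ≤ #(f ⁻¹' S) ≤ #(g ⁻¹' N_δ(S))`, and `g ⁻¹' N_δ(S)` is exactly the set of partners of `s`.
Hall yields an injection `A → B`, a bijection since `#A = #B`.
-/

open MeasureTheory

/-- The closed `δ`-neighbourhood `N_δ(A) = {x : ∃ a ∈ A, dist x a ≤ δ}` of a set `A`
in a metric space. -/
def nbhd {X : Type*} [PseudoMetricSpace X] (δ : ℝ) (A : Set X) : Set X :=
  {x | ∃ a ∈ A, dist x a ≤ δ}

open Finset

theorem exists_equiv_of_forall_card_le_card_filter {A B : Type*} [Fintype A] [Fintype B]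
    (hcard : Fintype.card A = Fintype.card B) (r : A → B → Prop) [DecidableRel r]
    (hall : ∀ s : Finset A, #s ≤ #{b | ∃ a ∈ s, r a b}) :
    ∃ h : A ≃ B, ∀ a, r a (h a) := by
  obtain ⟨h, hinj, hr⟩ := (Fintype.all_card_le_filter_rel_iff_exists_injective r).mp hall
  exact ⟨.ofBijective h ((Fintype.bijective_iff_injective_and_card h).mpr ⟨hinj, hcard⟩), hr⟩

section Nbhd

variable {X A B : Type*} [PseudoMetricSpace X] (δ : ℝ) (f : A → X) (g : B → X)

theorem preimage_nbhd_image (s : Set A) :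
    g ⁻¹' nbhd δ (f '' s) = {b | ∃ a ∈ s, dist (g b) (f a) ≤ δ} := by
  ext b
  simp [nbhd]

theorem card_le_card_filter_dist_le [MeasurableSpace X] [MeasurableSingletonClass X]
    [Finite A] [Fintype B] [DecidableRel fun a b => dist (g b) (f a) ≤ δ]
    (hequiv : ∀ S : Set X, MeasurableSet S → (f ⁻¹' S).ncard ≤ (g ⁻¹' nbhd δ S).ncard)
    (s : Finset A) : #s ≤ #{b | ∃ a ∈ s, dist (g b) (f a) ≤ δ} := by
  calc #s = (s : Set A).ncard := (Set.ncard_coe_finset s).symm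
    _ ≤ (f ⁻¹' (f '' s)).ncard := Set.ncard_le_ncard (Set.subset_preimage_image f s)
    _ ≤ (g ⁻¹' nbhd δ (f '' s)).ncard := hequiv _ (s.finite_toSet.image f).measurableSet
    _ = #{b | ∃ a ∈ s, dist (g b) (f a) ≤ δ} := by
      rw [preimage_nbhd_image, ← Set.ncard_coe_finset]
      simp

end Nbhd

theorem exists_bijection_of_deltaEquiv_counting_general
    {X : Type*} [MetricSpace X] [MeasurableSpace X] [BorelSpace X]
    {A B : Type*} [Fintype A] [Fintype B]
    (hcard : Fintype.card A = Fintype.card B)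
    (δ : ℝ) (f : A → X) (g : B → X)
    (hequiv : ∀ S : Set X, MeasurableSet S →
      (f ⁻¹' S).ncard ≤ (g ⁻¹' nbhd δ S).ncard) :
    ∃ h : A ≃ B, ∀ a : A, dist (g (h a)) (f a) ≤ δ := by
  classical
  exact exists_equiv_of_forall_card_le_card_filter hcard (fun a b => dist (g b) (f a) ≤ δ)
    (card_le_card_filter_dist_le δ f g hequiv)

/-- Hall's-marriage-type converse: if `A` and `B` are finite sets with the same number of
elements, and `f : A → X`, `g : B → X` are maps into a metric space `X` whose pushforwards of
the counting measures are `δ`-equivalent (i.e. for every Borel set `S ⊆ X`, the number of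
`a ∈ A` with `f a ∈ S` is at most the number of `b ∈ B` with `g b ∈ N_δ(S)`), then there is a
bijection `h : A → B` with `dist (g (h a)) (f a) ≤ δ` for every `a ∈ A`. -/
theorem exists_bijection_of_deltaEquiv_counting
    {X : Type*} [MetricSpace X] [MeasurableSpace X] [BorelSpace X]
    {A B : Type*} [Fintype A] [Fintype B]
    (hcard : Fintype.card A = Fintype.card B)
    (δ : ℝ) (hδ : 0 < δ) (f : A → X) (g : B → X)
    (hequiv : ∀ S : Set X, MeasurableSet S →
      (f ⁻¹' S).ncard ≤ (g ⁻¹' nbhd δ S).ncard) :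
    ∃ h : A ≃ B, ∀ a : A, dist (g (h a)) (f a) ≤ δ :=
  exists_bijection_of_deltaEquiv_counting_general hcard δ f g hequiv
end

section
/- Let m > 0, s > 0 and t ∈ ℝ satisfy sinh(m)·cosh(t) ≤ sinh(s). Then |t| ≤ s − log(m). If moreover s ≤ 1, then |t| ≤ log(s) + 1 − log(m). -/
/-!
Since `m ≤ sinh m` and `exp |t| ≤ 2 cosh t`, the hypothesis gives `m · exp |t| ≤ 2 sinh s`.
Bounding `2 sinh s` by `exp s`, and for `0 ≤ s ≤ 1` by `e · s` (convexity of `exp` on `[0, 1]`),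
and taking logarithms gives the two inequalities.
-/

namespace Real

lemma exp_abs_le_two_mul_cosh (x : ℝ) : exp |x| ≤ 2 * cosh x := by
  rw [← cosh_abs, cosh_eq]
  linarith [exp_pos (-|x|)]

lemma two_mul_sinh_le_exp (x : ℝ) : 2 * sinh x ≤ exp x := by
  rw [sinh_eq]
  linarith [exp_pos (-x)]

lemma exp_le_one_add_mul_exp_one_sub_one {x : ℝ} (h₀ : 0 ≤ x) (h₁ : x ≤ 1) :
    exp x ≤ 1 + x * (exp 1 - 1) := by
  have hchord := convexOn_exp.2 (Set.mem_univ 0) (Set.mem_univ 1) (sub_nonneg.2 h₁) h₀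
    (sub_add_cancel 1 x)
  simp only [smul_eq_mul, mul_zero, mul_one, zero_add, exp_zero] at hchord
  linarith

lemma two_mul_sinh_le_exp_one_mul {x : ℝ} (h₀ : 0 ≤ x) (h₁ : x ≤ 1) :
    2 * sinh x ≤ exp 1 * x := by
  rw [sinh_eq]
  linarith [exp_le_one_add_mul_exp_one_sub_one h₀ h₁, add_one_le_exp (-x)]

lemma mul_exp_abs_le_two_mul_sinh {m s t : ℝ} (hm : 0 ≤ m) (h : sinh m * cosh t ≤ sinh s) :
    m * exp |t| ≤ 2 * sinh s :=
  calc m * exp |t| ≤ sinh m * (2 * cosh t) :=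
        mul_le_mul (self_le_sinh_iff.2 hm) (exp_abs_le_two_mul_cosh t) (exp_pos _).le
          (sinh_nonneg_iff.2 hm)
    _ ≤ 2 * sinh s := by linarith

lemma le_sub_log_of_mul_exp_le {m u y : ℝ} (hm : 0 < m) (h : m * exp u ≤ exp y) :
    u ≤ y - log m := by
  rw [← exp_log hm, ← exp_add, exp_le_exp] at h
  linarith

end Real

/-- If `m, s > 0` and `t ∈ ℝ` satisfy `sinh(m) · cosh(t) ≤ sinh(s)`, then
`|t| ≤ s − log m`; and if moreover `s ≤ 1`, then `|t| ≤ log s + 1 − log m`. -/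
theorem abs_le_of_sinh_cosh_le
    (m s t : ℝ) (hm : 0 < m) (hs : 0 < s)
    (h : Real.sinh m * Real.cosh t ≤ Real.sinh s) :
    |t| ≤ s - Real.log m ∧ (s ≤ 1 → |t| ≤ Real.log s + 1 - Real.log m) := by
  have hkey := Real.mul_exp_abs_le_two_mul_sinh hm.le h
  refine ⟨Real.le_sub_log_of_mul_exp_le hm (hkey.trans (Real.two_mul_sinh_le_exp s)),
    fun hs₁ => ?_⟩
  have hsmall : m * Real.exp |t| ≤ Real.exp (1 + Real.log s) := by
    rw [Real.exp_add, Real.exp_log hs]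
    exact hkey.trans (Real.two_mul_sinh_le_exp_one_mul hs.le hs₁)
  linarith [Real.le_sub_log_of_mul_exp_le hm hsmall]
end
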